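/- arXiv:2601.12604 — 4 statements merged into one kernel-verified Lean document; each statement's English description precedes it below -/
import Mathlib

section
/- Let A be a finite nonempty set, ν̲ > 0, and q a probability distribution on A with q(a) > ν̲ for all a ∈ A. Assume f is strictly convex on [0, 1/ν̲], differentiable on (0, 1/ν̲), and f'(u) → −∞ as u → 0⁺. Then for every x : A → ℝ: (a) the maximizer ν_x := softargmax_f(x,q) satisfies ν_x(a) > 0 for all a ∈ A; (b) there exists a unique real number μ_x with max_{a} x(a) − f'(1/ν̲) ≤ μ_x ≤ max_{a} x(a) − f'(1) such that ν_x(a) = q(a)·(f')⁻¹(x(a) − μ_x) for all a ∈ A, where (f')⁻¹ denotes the inverse of the strictly increasing map f' on (−∞, f'(1/ν̲)]; and (c) μ_x is the unique root μ in that range of the equation ∑_{a∈A} q(a)·(f')⁻¹(x(a) − μ) = 1. -/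
open Finset Filter

noncomputable section

/-- A probability distribution on a finite set. -/
def IsProbDist {A : Type*} [Fintype A] (ν : A → ℝ) : Prop :=
  (∀ a, 0 ≤ ν a) ∧ ∑ a, ν a = 1

/-- The f-divergence between two distributions on a finite set. -/
def fDiv {A : Type*} [Fintype A] (f : ℝ → ℝ) (ν q : A → ℝ) : ℝ :=
  ∑ a, q a * f (ν a / q a)

/-- `ν` is the (unique) maximizer of `⟨·,x⟩ - D_f(·‖q)` over probability distributions. -/
def IsSoftargmax {A : Type*} [Fintype A] (f : ℝ → ℝ) (q x ν : A → ℝ) : Prop :=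
  IsProbDist ν ∧
  (∀ m : A → ℝ, IsProbDist m →
    (∑ a, m a * x a) - fDiv f m q ≤ (∑ a, ν a * x a) - fDiv f ν q) ∧
  (∀ m : A → ℝ, IsProbDist m →
    (∑ a, m a * x a) - fDiv f m q = (∑ a, ν a * x a) - fDiv f ν q → m = ν)

theorem stmt0 {A : Type*} [Fintype A] [Nonempty A]
    (νb : ℝ) (hνb : 0 < νb)
    (q : A → ℝ) (hq : IsProbDist q) (hqb : ∀ a, νb < q a)
    (f : ℝ → ℝ)
    (hconv : StrictConvexOn ℝ (Set.Icc (0:ℝ) (1/νb)) f)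
    (hdiff : ∀ u ∈ Set.Ioo (0:ℝ) (1/νb), DifferentiableAt ℝ f u)
    (hlim : Tendsto (deriv f) (nhdsWithin 0 (Set.Ioi 0)) atBot)
    (finv : ℝ → ℝ)
    (hfinv₁ : ∀ u : ℝ, 0 < u → u ≤ 1/νb → finv (deriv f u) = u)
    (hfinv₂ : ∀ y : ℝ, y ≤ deriv f (1/νb) →
      deriv f (finv y) = y ∧ 0 < finv y ∧ finv y ≤ 1/νb)
    (x νx : A → ℝ) (hmax : IsSoftargmax f q x νx) :
    (∀ a, 0 < νx a) ∧
    ∃ μx : ℝ,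
      (Finset.univ.sup' Finset.univ_nonempty x - deriv f (1/νb) ≤ μx ∧
        μx ≤ Finset.univ.sup' Finset.univ_nonempty x - deriv f 1) ∧
      (∀ a, νx a = q a * finv (x a - μx)) ∧
      (∀ μ' : ℝ,
        (Finset.univ.sup' Finset.univ_nonempty x - deriv f (1/νb) ≤ μ' ∧
          μ' ≤ Finset.univ.sup' Finset.univ_nonempty x - deriv f 1) →
        (∀ a, νx a = q a * finv (x a - μ')) → μ' = μx) ∧
      (∑ a, q a * finv (x a - μx) = 1) ∧
      (∀ μ' : ℝ,
        (Finset.univ.sup' Finset.univ_nonempty x - deriv f (1/νb) ≤ μ' ∧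
          μ' ≤ Finset.univ.sup' Finset.univ_nonempty x - deriv f 1) →
        (∑ a, q a * finv (x a - μ') = 1) → μ' = μx) := by
  classical
  obtain ⟨⟨hν0, hν1⟩, hopt, -⟩ := hmax
  obtain ⟨hq0, hq1⟩ := hq
  set c := 1/νb with hcdef
  have hc0 : 0 < c := by positivity
  have hqpos : ∀ a, 0 < q a := fun a => hνb.trans (hqb a)
  have hqle1 : ∀ a, q a ≤ 1 := by
    intro a
    rw [← hq1]
    exact Finset.single_le_sum (fun i _ => (hqpos i).le) (mem_univ a)
  have hc1 : 1 < c := by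
    have h1 := hqb (Classical.arbitrary A)
    have h2 := hqle1 (Classical.arbitrary A)
    rw [hcdef]
    exact one_lt_one_div hνb (by linarith)
  have hνle1 : ∀ a, νx a ≤ 1 := by
    intro a
    rw [← hν1]
    exact Finset.single_le_sum (fun i _ => hν0 i) (mem_univ a)
  have hratio_lt : ∀ a, νx a / q a < c := by
    intro a
    rw [div_lt_iff₀ (hqpos a)]
    have hνbc : νb * c = 1 := by rw [hcdef]; field_simp
    nlinarith [hqb a, hνle1 a, hc0]
  have hratio_mem : ∀ a, νx a / q a ∈ Set.Icc (0:ℝ) c :=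
    fun a => ⟨div_nonneg (hν0 a) (hqpos a).le, (hratio_lt a).le⟩
  -- perturbation inequality
  have pert : ∀ a b : A, a ≠ b → ∀ ε : ℝ, 0 < ε → ε ≤ νx b →
      ε * (x a - x b) ≤ q a * (f ((νx a + ε)/q a) - f (νx a / q a))
        - q b * (f (νx b / q b) - f ((νx b - ε)/ q b)) := by
    intro a b hab ε hε hεb
    set m : A → ℝ := fun i => if i = a then νx a + ε else if i = b then νx b - ε else νx i
      with hm
    have hma : m a = νx a + ε := by simp [hm]
    have hmb : m b = νx b - ε := by simp [hm, Ne.symm hab]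
    have hmi : ∀ i, i ≠ a → i ≠ b → m i = νx i := by
      intro i h1 h2; simp [hm, h1, h2]
    have hdiffsum : ∀ (g : A → ℝ), (∀ i, i ≠ a → i ≠ b → g i = 0) →
        ∑ i, g i = g a + g b :=
      fun g h0 => Fintype.sum_eq_add a b hab (fun i hi => h0 i hi.1 hi.2)
    have hmdist : IsProbDist m := by
      constructor
      · intro i
        rcases eq_or_ne i a with rfl|hia
        · rw [hma]; linarith [hν0 i]
        · rcases eq_or_ne i b with rfl|hib
          · rw [hmb]; linarith
          · rw [hmi i hia hib]; exact hν0 i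
      · have h := hdiffsum (fun i => m i - νx i)
          (fun i h1 h2 => by simp only [hmi i h1 h2, sub_self])
        rw [Finset.sum_sub_distrib, hν1] at h
        simp only [hma, hmb] at h
        linarith
    have hopt' := hopt m hmdist
    have e1 : ∑ i, m i * x i - ∑ i, νx i * x i = ε * x a - ε * x b := by
      rw [← Finset.sum_sub_distrib,
        hdiffsum (fun i => m i * x i - νx i * x i)
          (fun i h1 h2 => by simp only [hmi i h1 h2, sub_self]),
        hma, hmb]
      ring
    have e2 : fDiv f m q - fDiv f νx q
        = q a * (f ((νx a + ε)/q a) - f (νx a / q a))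
          + q b * (f ((νx b - ε)/q b) - f (νx b / q b)) := by
      unfold fDiv
      rw [← Finset.sum_sub_distrib,
        hdiffsum (fun i => q i * f (m i / q i) - q i * f (νx i / q i))
          (fun i h1 h2 => by simp only [hmi i h1 h2, sub_self]),
        hma, hmb]
      ring
    linarith
  have hsm : StrictMonoOn (deriv f) (Set.Ioo (0:ℝ) c) :=
    (hconv.subset Set.Ioo_subset_Icc_self (convex_Ioo _ _)).strictMonoOn_deriv
      (fun u hu => hdiff u hu)
  -- positivity
  have hpos : ∀ a, 0 < νx a := by
    intro a
    rcases (hν0 a).lt_or_eq with h|h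
    · exact h
    exfalso
    obtain ⟨b, hb⟩ : ∃ b, 0 < νx b := by
      by_contra hcon; push_neg at hcon
      have h' : ∑ i, νx i ≤ 0 := Finset.sum_nonpos (fun i _ => hcon i)
      rw [hν1] at h'; linarith
    have hab : a ≠ b := by rintro rfl; rw [← h] at hb; exact lt_irrefl 0 hb
    set t := νx b with ht
    set M := deriv f (t / (2 * q b)) with hM
    set C := x a - x b + M with hC
    have hev : ∀ᶠ z in nhdsWithin 0 (Set.Ioi 0), deriv f z < C :=
      hlim.eventually (eventually_lt_atBot C)
    rw [eventually_nhdsWithin_iff] at hev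
    obtain ⟨δ, hδ0, hδ⟩ := Metric.eventually_nhds_iff.mp hev
    set ε := min (min (q a * δ / 2) (q a * c / 2)) (t / 2) with hε
    have hε0 : 0 < ε :=
      lt_min (lt_min (div_pos (mul_pos (hqpos a) hδ0) two_pos)
        (div_pos (mul_pos (hqpos a) hc0) two_pos)) (div_pos hb two_pos)
    have hεt : ε ≤ t / 2 := min_le_right _ _
    have hεδ : ε / q a < δ := by
      have h1 : ε ≤ q a * δ / 2 := le_trans (min_le_left _ _) (min_le_left _ _)
      rw [div_lt_iff₀ (hqpos a)]
      nlinarith [hqpos a, hδ0]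
    have hεc : ε / q a < c := by
      have h1 : ε ≤ q a * c / 2 := le_trans (min_le_left _ _) (min_le_right _ _)
      rw [div_lt_iff₀ (hqpos a)]
      nlinarith [hqpos a, hc0]
    have hεqa : 0 < ε / q a := div_pos hε0 (hqpos a)
    have hp := pert a b hab ε hε0 (by linarith)
    rw [← h, zero_add, zero_div] at hp
    -- slope bounds
    have b1 : f (ε / q a) - f 0 ≤ deriv f (ε / q a) * (ε / q a) := by
      have hs := hconv.convexOn.slope_le_deriv (Set.left_mem_Icc.mpr hc0.le)
        ⟨hεqa.le, hεc.le⟩ hεqa (hdiff _ ⟨hεqa, hεc⟩)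
      rw [slope_def_field, sub_zero] at hs
      exact (div_le_iff₀ hεqa).mp hs
    have ht0pos : 0 < (t - ε) / q b := by
      apply div_pos _ (hqpos b)
      linarith
    have ht0c : (t - ε) / q b < c :=
      lt_of_le_of_lt ((div_le_div_iff_of_pos_right (hqpos b)).mpr (by linarith)) (hratio_lt b)
    have ht1c : t / q b < c := hratio_lt b
    have b2 : deriv f ((t - ε) / q b) ≤ (f (t / q b) - f ((t - ε) / q b)) / (ε / q b) := by
      have hlt2 : (t - ε) / q b < t / q b :=
        (div_lt_div_iff_of_pos_right (hqpos b)).mpr (by linarith)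
      have hs := hconv.convexOn.deriv_le_slope ⟨ht0pos.le, ht0c.le⟩
        ⟨div_nonneg (by linarith [hb] : (0:ℝ) ≤ t) (hqpos b).le, ht1c.le⟩ hlt2
        (hdiff _ ⟨ht0pos, ht0c⟩)
      rw [slope_def_field] at hs
      have he' : t / q b - (t - ε) / q b = ε / q b := by
        rw [div_sub_div_same, sub_sub_cancel]
      rw [he'] at hs
      exact hs
    have hMpos' : t / (2 * q b) ∈ Set.Ioo (0:ℝ) c := by
      constructor
      · exact div_pos hb (by linarith [hqpos b])
      · calc t / (2 * q b) ≤ t / q b :=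
              div_le_div_of_nonneg_left hb.le (hqpos b) (by linarith [hqpos b])
          _ < c := ht1c
    have b3 : M ≤ deriv f ((t - ε) / q b) := by
      rw [hM]
      have hle : t / (2 * q b) ≤ (t - ε) / q b := by
        rw [div_le_div_iff₀ (by linarith [hqpos b] : (0:ℝ) < 2 * q b) (hqpos b)]
        nlinarith [hqpos b]
      rcases hle.eq_or_lt with he'|hl'
      · rw [he']
      · exact (hsm hMpos' ⟨ht0pos, ht0c⟩ hl').le
    have c1 : q a * (f (ε / q a) - f 0) ≤ ε * deriv f (ε / q a) := by
      calc q a * (f (ε / q a) - f 0) ≤ q a * (deriv f (ε / q a) * (ε / q a)) :=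
            mul_le_mul_of_nonneg_left b1 (hqpos a).le
        _ = q a * (ε / q a) * deriv f (ε / q a) := by ring
        _ = ε * deriv f (ε / q a) := by
            rw [mul_div_cancel₀ _ (hqpos a).ne']
    have c2 : ε * M ≤ q b * (f (t / q b) - f ((t - ε) / q b)) := by
      have hεqb : 0 < ε / q b := div_pos hε0 (hqpos b)
      have h2' : M * (ε / q b) ≤ f (t / q b) - f ((t - ε) / q b) :=
        le_trans (mul_le_mul_of_nonneg_right b3 hεqb.le) ((le_div_iff₀ hεqb).mp b2)
      calc ε * M = q b * (ε / q b) * M := by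
            rw [mul_div_cancel₀ _ (hqpos b).ne']
        _ = q b * (M * (ε / q b)) := by ring
        _ ≤ q b * (f (t / q b) - f ((t - ε) / q b)) :=
            mul_le_mul_of_nonneg_left h2' (hqpos b).le
    have hC' : C ≤ deriv f (ε / q a) := by
      have hstep : ε * (x a - x b) ≤ ε * deriv f (ε / q a) - ε * M := by linarith
      rw [hC]
      have := le_of_mul_le_mul_left (show ε * (x a - x b + M) ≤ ε * deriv f (ε / q a) by linarith) hε0
      linarith
    have hD1 : deriv f (ε / q a) < C := by
      apply hδ
      · rw [Real.dist_eq, sub_zero, abs_of_pos hεqa]; exact hεδ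
      · exact Set.mem_Ioi.mpr hεqa
    linarith
  -- endpoint comparison via Darboux
  have hY : ∀ u ∈ Set.Ioo (0:ℝ) c, deriv f u < deriv f c := by
    intro u hu
    by_contra hcon; push_neg at hcon
    rcases hcon.eq_or_lt with he|hlt'
    · have h1 := hfinv₁ u hu.1 hu.2.le
      have h2 := hfinv₁ c hc0 le_rfl
      rw [← he] at h1
      rw [h1] at h2
      exact hu.2.ne h2
    · have hev : ∀ᶠ z in nhdsWithin 0 (Set.Ioi 0),
          deriv f z < deriv f c ∧ z ∈ Set.Ioo (0:ℝ) u :=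
        (hlim.eventually (eventually_lt_atBot _)).and
          (Ioo_mem_nhdsGT_of_mem ⟨le_refl 0, hu.1⟩)
      obtain ⟨u₀, hu₀d, hu₀m⟩ := hev.exists
      have hder : ∀ z ∈ Set.Icc u₀ u, HasDerivWithinAt f (deriv f z) (Set.Icc u₀ u) z := by
        intro z hz
        exact ((hdiff z ⟨lt_of_lt_of_le hu₀m.1 hz.1,
          lt_of_le_of_lt hz.2 hu.2⟩).hasDerivAt).hasDerivWithinAt
      obtain ⟨w, hw, hwd⟩ := exists_hasDerivWithinAt_eq_of_gt_of_lt hu₀m.2.le hder hu₀d hlt'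
      have h1 := hfinv₁ w (lt_trans hu₀m.1 hw.1) (le_of_lt (lt_trans hw.2 hu.2))
      have h2 := hfinv₁ c hc0 le_rfl
      rw [hwd] at h1
      rw [h1] at h2
      exact (ne_of_lt (lt_trans hw.2 hu.2)) h2
  have hlt : ∀ u v : ℝ, u ∈ Set.Ioo (0:ℝ) c → 0 < v → v ≤ c → u < v →
      deriv f u < deriv f v := by
    intro u v hu hv0 hvc huv
    rcases hvc.eq_or_lt with h|h
    · rw [h]; exact hY u hu
    · exact hsm hu ⟨hv0, h⟩ huv
  have hratio_Ioo : ∀ a, νx a / q a ∈ Set.Ioo (0:ℝ) c :=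
    fun a => ⟨div_pos (hpos a) (hqpos a), hratio_lt a⟩
  -- stationarity
  have key : ∀ a b : A, a ≠ b →
      x a - x b ≤ deriv f (νx a / q a) - deriv f (νx b / q b) := by
    intro a b hab
    have hs' := hratio_Ioo a
    have ht' := hratio_Ioo b
    -- limit of the right difference quotient at νx a / q a
    have Ta : Tendsto (fun ε : ℝ => (f (νx a / q a + ε / q a) - f (νx a / q a)) / (ε / q a))
        (nhdsWithin 0 (Set.Ioi 0)) (nhds (deriv f (νx a / q a))) := by
      have hd : HasDerivAt f (deriv f (νx a / q a)) (νx a / q a) :=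
        (hdiff _ hs').hasDerivAt
      have hslope := hasDerivAt_iff_tendsto_slope.mp hd
      have hmap : Tendsto (fun ε : ℝ => νx a / q a + ε / q a)
          (nhdsWithin 0 (Set.Ioi 0)) (nhdsWithin (νx a / q a) {νx a / q a}ᶜ) := by
        rw [tendsto_nhdsWithin_iff]
        constructor
        · have hcont : Tendsto (fun ε : ℝ => νx a / q a + ε / q a) (nhds 0)
              (nhds (νx a / q a + 0 / q a)) :=
            (tendsto_id.div_const (q a)).const_add (νx a / q a)
          rw [zero_div, add_zero] at hcont
          exact hcont.mono_left nhdsWithin_le_nhds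
        · filter_upwards [self_mem_nhdsWithin] with ε hε
          have hεq : 0 < ε / q a := div_pos hε (hqpos a)
          simp only [Set.mem_compl_iff, Set.mem_singleton_iff]
          intro hcon
          have : ε / q a = 0 := by linarith [congrArg (fun z => z - νx a / q a) hcon]
          linarith
      have hcomp := hslope.comp hmap
      refine hcomp.congr (fun ε => ?_)
      simp only [Function.comp_apply, slope_def_field]
      rw [show νx a / q a + ε / q a - νx a / q a = ε / q a by ring]
    have Tb : Tendsto (fun ε : ℝ => (f (νx b / q b) - f (νx b / q b - ε / q b)) / (ε / q b))
        (nhdsWithin 0 (Set.Ioi 0)) (nhds (deriv f (νx b / q b))) := by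
      have hd : HasDerivAt f (deriv f (νx b / q b)) (νx b / q b) :=
        (hdiff _ ht').hasDerivAt
      have hslope := hasDerivAt_iff_tendsto_slope.mp hd
      have hmap : Tendsto (fun ε : ℝ => νx b / q b - ε / q b)
          (nhdsWithin 0 (Set.Ioi 0)) (nhdsWithin (νx b / q b) {νx b / q b}ᶜ) := by
        rw [tendsto_nhdsWithin_iff]
        constructor
        · have hcont : Tendsto (fun ε : ℝ => νx b / q b - ε / q b) (nhds 0)
              (nhds (νx b / q b - 0 / q b)) :=
            (tendsto_id.div_const (q b)).const_sub (νx b / q b)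
          rw [zero_div, sub_zero] at hcont
          exact hcont.mono_left nhdsWithin_le_nhds
        · filter_upwards [self_mem_nhdsWithin] with ε hε
          have hεq : 0 < ε / q b := div_pos hε (hqpos b)
          simp only [Set.mem_compl_iff, Set.mem_singleton_iff]
          intro hcon
          have : ε / q b = 0 := by linarith [congrArg (fun z => νx b / q b - z) hcon]
          linarith
      have hcomp := hslope.comp hmap
      refine hcomp.congr (fun ε => ?_)
      simp only [Function.comp_apply, slope_def_field]
      rw [show νx b / q b - ε / q b - νx b / q b = -(ε / q b) by ring, div_neg, ← neg_div,
        neg_sub]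
    have Tall := Ta.sub Tb
    refine ge_of_tendsto Tall ?_
    filter_upwards [Ioo_mem_nhdsGT_of_mem (Set.left_mem_Ico.mpr (hpos b))] with ε hε
    have hp := pert a b hab ε hε.1 hε.2.le
    have e1 : (f (νx a / q a + ε / q a) - f (νx a / q a)) / (ε / q a)
        = q a * (f ((νx a + ε) / q a) - f (νx a / q a)) / ε := by
      rw [show (νx a + ε) / q a = νx a / q a + ε / q a from add_div _ _ _]
      rw [div_div_eq_mul_div, div_eq_div_iff hε.1.ne' hε.1.ne']
      ring
    have e2 : (f (νx b / q b) - f (νx b / q b - ε / q b)) / (ε / q b)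
        = q b * (f (νx b / q b) - f ((νx b - ε) / q b)) / ε := by
      rw [show (νx b - ε) / q b = νx b / q b - ε / q b from sub_div _ _ _]
      rw [div_div_eq_mul_div, div_eq_div_iff hε.1.ne' hε.1.ne']
      ring
    rw [e1, e2, div_sub_div_same, le_div_iff₀ hε.1]
    linarith
  set a₀ := Classical.arbitrary A with ha₀
  set μx := x a₀ - deriv f (νx a₀ / q a₀) with hμ
  have heq : ∀ a, deriv f (νx a / q a) = x a - μx := by
    intro a
    by_cases h : a = a₀
    · rw [h, hμ]; ring
    · have h1 := key a a₀ h
      have h2 := key a₀ a (Ne.symm h)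
      rw [hμ]; linarith
  have hfinv_eq : ∀ a, finv (x a - μx) = νx a / q a := by
    intro a; rw [← heq a]
    exact hfinv₁ _ (hratio_Ioo a).1 (hratio_Ioo a).2.le
  have hν_eq : ∀ a, νx a = q a * finv (x a - μx) := by
    intro a
    rw [hfinv_eq a, mul_comm, div_mul_cancel₀ _ (hqpos a).ne']
  set X := Finset.univ.sup' Finset.univ_nonempty x with hX
  have hxleX : ∀ a, x a ≤ X := fun a => Finset.le_sup' x (mem_univ a)
  have hbound_up : μx ≤ X - deriv f 1 := by
    obtain ⟨a, ha⟩ : ∃ a, q a ≤ νx a := by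
      by_contra hcon; push_neg at hcon
      have h := Finset.sum_lt_sum_of_nonempty Finset.univ_nonempty
        (fun a _ => hcon a)
      rw [hν1, hq1] at h
      exact lt_irrefl 1 h
    have h1 : deriv f 1 ≤ deriv f (νx a / q a) := by
      rcases ((one_le_div (hqpos a)).mpr ha).eq_or_lt with he|hlt'
      · rw [← he]
      · exact (hsm ⟨one_pos, hc1⟩ (hratio_Ioo a) hlt').le
    have h2 := heq a
    have h3 := hxleX a
    rw [hμ] at h2 ⊢
    linarith
  have hbound_lo : X - deriv f c ≤ μx := by
    obtain ⟨a, -, ha⟩ := Finset.exists_mem_eq_sup' Finset.univ_nonempty x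
    have h1 : deriv f (νx a / q a) ≤ deriv f c := (hY _ (hratio_Ioo a)).le
    have h2 := heq a
    rw [← hX] at ha
    rw [hμ] at h2 ⊢
    rw [ha]
    linarith
  have hargle : ∀ (μ' : ℝ), X - deriv f c ≤ μ' → ∀ a, x a - μ' ≤ deriv f c := by
    intro μ' h a; have := hxleX a; linarith
  have hfinvmono : ∀ y₁ y₂ : ℝ, y₁ < y₂ → y₂ ≤ deriv f c → finv y₁ < finv y₂ := by
    intro y₁ y₂ h12 h2Y
    obtain ⟨d1, p1, l1⟩ := hfinv₂ y₁ (by linarith)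
    obtain ⟨d2, p2, l2⟩ := hfinv₂ y₂ h2Y
    by_contra hcon; push_neg at hcon
    rcases hcon.eq_or_lt with he|hl
    · rw [← d1, ← d2, he] at h12; exact lt_irrefl _ h12
    · have := hlt (finv y₂) (finv y₁) ⟨p2, lt_of_lt_of_le hl l1⟩ p1 l1 hl
      rw [d1, d2] at this; linarith
  refine ⟨hpos, μx, ⟨hbound_lo, hbound_up⟩, hν_eq, ?_, ?_, ?_⟩
  · intro μ' ⟨hlo', hup'⟩ hpt
    set a := Classical.arbitrary A
    have e1 : finv (x a - μ') = νx a / q a := by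
      rw [eq_div_iff (hqpos a).ne', mul_comm]
      exact (hpt a).symm
    have d1 := (hfinv₂ (x a - μ') (hargle μ' hlo' a)).1
    have d2 := (hfinv₂ (x a - μx) (hargle μx hbound_lo a)).1
    rw [e1] at d1
    rw [hfinv_eq a] at d2
    rw [d2] at d1
    linarith
  · rw [← hν1]
    exact Finset.sum_congr rfl fun a _ => (hν_eq a).symm
  · intro μ' ⟨hlo', hup'⟩ hsum
    have hsumx : ∑ a, q a * finv (x a - μx) = 1 := by
      rw [← hν1]
      exact Finset.sum_congr rfl fun a _ => (hν_eq a).symm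
    by_contra hne
    rcases lt_or_gt_of_ne hne with h|h
    · have hlt1 : (1:ℝ) < 1 := by
        calc (1:ℝ) = ∑ a, q a * finv (x a - μx) := hsumx.symm
          _ < ∑ a, q a * finv (x a - μ') := by
              refine Finset.sum_lt_sum_of_nonempty Finset.univ_nonempty (fun a _ => ?_)
              exact mul_lt_mul_of_pos_left
                (hfinvmono _ _ (by linarith) (hargle μ' hlo' a)) (hqpos a)
          _ = 1 := hsum
      exact lt_irrefl 1 hlt1
    · have hlt1 : (1:ℝ) < 1 := by
        calc (1:ℝ) = ∑ a, q a * finv (x a - μ') := hsum.symm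
          _ < ∑ a, q a * finv (x a - μx) := by
              refine Finset.sum_lt_sum_of_nonempty Finset.univ_nonempty (fun a _ => ?_)
              exact mul_lt_mul_of_pos_left
                (hfinvmono _ _ (by linarith) (hargle μx hbound_lo a)) (hqpos a)
          _ = 1 := hsumx
      exact lt_irrefl 1 hlt1

end
end

section
/- Under Assumption A_f(ρ̲) and P(ρ̲), and for λ > 0, for every θ : S×A → ℝ: V*_λ(ρ) − V_θ(ρ) ≤ (λ·ω_f/(1−γ))·∑_{s∈S} ‖ζ_θ(s)‖₂². -/
open Finset Filter MeasureTheory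

noncomputable section

/-- Assumption A_f(ρ̲) on the divergence generator `f`, with constants `ωf`, `κf`, `ιf`:
(i) boundedness, strict convexity, `f 1 = 0`, three-times differentiability;
(ii) `f' → -∞` at `0⁺` and `|f'/f''|` bounded near `0⁺`;
(iii) `1/(u f'' u) ≤ ωf` and `|f''' u / (f'' u)²| ≤ κf` on `(0, 1/ρ̲]`;
(iv) `f''` decreasing on `(0, ιf]` and dominated by `f'' ιf` on `[ιf, 1/ρ̲]`. -/
def AF (f : ℝ → ℝ) (ρb ωf κf ιf : ℝ) : Prop :=
  (∃ C : ℝ, ∀ u ∈ Set.Icc (0:ℝ) (1/ρb), |f u| ≤ C) ∧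
  StrictConvexOn ℝ (Set.Icc (0:ℝ) (1/ρb)) f ∧
  f 1 = 0 ∧
  (∀ u ∈ Set.Ioo (0:ℝ) (1/ρb),
    DifferentiableAt ℝ f u ∧ DifferentiableAt ℝ (deriv f) u ∧
      DifferentiableAt ℝ (deriv (deriv f)) u) ∧
  Tendsto (deriv f) (nhdsWithin 0 (Set.Ioi 0)) atBot ∧
  (∃ M : ℝ, ∀ᶠ u in nhdsWithin (0:ℝ) (Set.Ioi 0), |deriv f u / deriv (deriv f) u| ≤ M) ∧
  1 ≤ ωf ∧ 0 < κf ∧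
  (∀ u ∈ Set.Ioc (0:ℝ) (1/ρb),
    1 / (u * deriv (deriv f) u) ≤ ωf ∧
      |deriv (deriv (deriv f)) u / (deriv (deriv f) u) ^ 2| ≤ κf) ∧
  (0 < ιf ∧ ιf ≤ 1) ∧
  (∀ u v : ℝ, 0 < u → u ≤ v → v ≤ ιf → deriv (deriv f) v ≤ deriv (deriv f) u) ∧
  (∀ u : ℝ, ιf ≤ u → u ≤ 1/ρb → deriv (deriv f) u ≤ deriv (deriv f) ιf)

/-- A policy: a probability distribution over actions for each state. -/
def IsPolicy {S A : Type*} [Fintype A] (π : S → A → ℝ) : Prop := ∀ s, IsProbDist (π s)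

/-- `V` is the f-regularized value function of `π` (Bellman fixed point). -/
def IsRegValue {S A : Type*} [Fintype S] [Fintype A] (P : S → A → S → ℝ) (r : S → A → ℝ)
    (γ lam : ℝ) (f : ℝ → ℝ) (pref : S → A → ℝ) (π : S → A → ℝ) (V : S → ℝ) : Prop :=
  ∀ s, V s = (∑ a, π s a * r s a) - lam * fDiv f (π s) (pref s)
      + γ * ∑ a, π s a * ∑ s', P s a s' * V s'

/-- `Vstar` is the optimal f-regularized value function: it is attained by some policy and
dominates (statewise) the regularized value of every policy. -/
def IsOptRegValue {S A : Type*} [Fintype S] [Fintype A] (P : S → A → S → ℝ) (r : S → A → ℝ)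
    (γ lam : ℝ) (f : ℝ → ℝ) (pref : S → A → ℝ) (Vstar : S → ℝ) : Prop :=
  (∃ πopt, IsPolicy πopt ∧ IsRegValue P r γ lam f pref πopt Vstar) ∧
  (∀ π V, IsPolicy π → IsRegValue P r γ lam f pref π V → ∀ s, V s ≤ Vstar s)

/-- Discounted state-occupancy measure `d^π_ρ(s) = (1-γ) ∑_t γ^t (ρᵀ P_π^t)(s)`. -/
def dOcc {S A : Type*} [Fintype S] [Fintype A] (P : S → A → S → ℝ) (γ : ℝ)
    (ρ : S → ℝ) (π : S → A → ℝ) (s : S) : ℝ :=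
  (1 - γ) * ∑' t : ℕ,
    γ ^ t * ((fun (m : S → ℝ) (s' : S) => ∑ u, m u * ∑ a, π u a * P u a s')^[t] ρ) s

/-- `S_θ(s)` from the paper, written for a policy `π`. -/
def Sval {S A : Type*} [Fintype A] (f : ℝ → ℝ) (pref : S → A → ℝ) (π : S → A → ℝ)
    (s : S) : ℝ :=
  ∑ a, pref s a / deriv (deriv f) (π s a / pref s a)

/-- The normalized weights `W_θ(a|s)` from the paper, written for a policy `π`. -/
def Wval {S A : Type*} [Fintype A] (f : ℝ → ℝ) (pref : S → A → ℝ) (π : S → A → ℝ)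
    (s : S) (a : A) : ℝ :=
  (pref s a / deriv (deriv f) (π s a / pref s a)) / Sval f pref π s

/-- The regularized Q-function `Q(s,a) = r(s,a) + γ ∑_{s'} P(s'|s,a) V(s')`. -/
def Qval {S A : Type*} [Fintype S] [Fintype A] (P : S → A → S → ℝ) (r : S → A → ℝ)
    (γ : ℝ) (V : S → ℝ) (s : S) (a : A) : ℝ :=
  r s a + γ * ∑ s', P s a s' * V s'

/-!
The objective `ν ↦ ⟨ν, x⟩ - D_f(ν‖q)` is strongly concave on the simplex with modulus `1 / ω_f`:
its curvature in the coordinate `ν(a)` is `f''(ν(a) / q(a)) / q(a) ≥ 1 / (ω_f ν(a)) ≥ 1 / ω_f`.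
Its maximizer has full support because `f' → -∞` at `0`, hence satisfies a first-order condition.
Comparing `π_θ(·|s) = softargmax_f(θ(s,·))` with `softargmax_f(Q_θ(s,·)/λ)` through their
first-order conditions bounds the one-step regret of `π_θ` against any policy by `λ ω_f ‖ζ_θ(s)‖²`;
the shift by `K_θ(s)` is free because both are distributions. Subtracting the Bellman equations of
`V*_λ` and `V_θ`, the gap `Δ = V*_λ - V_θ` satisfies `Δ ≤ E + γ P_{π*} Δ` with
`E(s) = λ ω_f ‖ζ_θ(s)‖²`, so `max Δ ≤ (∑ E) / (1 - γ)`.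
-/

open Topology

namespace IsProbDist

variable {A : Type*} [Fintype A] {ν μ : A → ℝ}

lemma le_one (h : IsProbDist ν) (a : A) : ν a ≤ 1 :=
  h.2 ▸ single_le_sum (fun b _ => h.1 b) (mem_univ a)

lemma exists_pos (h : IsProbDist ν) : ∃ a, 0 < ν a := by
  by_contra! hle
  linarith [h.2, sum_nonpos fun a (_ : a ∈ univ) => hle a]

lemma sum_mul_le (h : IsProbDist ν) {g : A → ℝ} {M : ℝ} (hg : ∀ a, g a ≤ M) :
    ∑ a, ν a * g a ≤ M :=
  calc ∑ a, ν a * g a ≤ ∑ a, ν a * M :=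
        sum_le_sum fun a _ => mul_le_mul_of_nonneg_left (hg a) (h.1 a)
    _ = M := by rw [← sum_mul, h.2, one_mul]

lemma add_mul_sub (hν : IsProbDist ν) (hμ : IsProbDist μ) {t : ℝ} (ht : t ∈ Set.Icc (0 : ℝ) 1) :
    IsProbDist fun a => ν a + t * (μ a - ν a) := by
  refine ⟨fun a => ?_, ?_⟩
  · nlinarith [hν.1 a, hμ.1 a, ht.1, ht.2]
  · rw [sum_add_distrib, ← mul_sum, sum_sub_distrib, hν.2, hμ.2]
    ring

lemma sum_sub_mul_sub_const (hν : IsProbDist ν) (hμ : IsProbDist μ) (g : A → ℝ) (K : ℝ) :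
    ∑ a, (μ a - ν a) * (g a - K) = ∑ a, (μ a - ν a) * g a := by
  simp only [mul_sub, sum_sub_distrib, ← sum_mul, hν.2, hμ.2, sub_self, zero_mul, sub_zero]

lemma update_update (h : IsProbDist ν) [DecidableEq A] {a b : A} (hab : a ≠ b) {s : ℝ}
    (hs : 0 ≤ s) (hsb : s ≤ ν b) :
    IsProbDist (Function.update (Function.update ν a (ν a + s)) b (ν b - s)) := by
  refine ⟨fun c => ?_, ?_⟩
  · rcases eq_or_ne c b with rfl | hcb
    · simpa using hsb
    rcases eq_or_ne c a with rfl | hca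
    · simpa [Function.update_of_ne hcb] using add_nonneg (h.1 c) hs
    simpa [Function.update_of_ne hcb, Function.update_of_ne hca] using h.1 c
  · rw [← h.2, ← sub_eq_zero, ← sum_sub_distrib, Fintype.sum_eq_add a b hab]
    · simp [Function.update_of_ne hab]
    · rintro c ⟨hca, hcb⟩
      simp [Function.update_of_ne hca, Function.update_of_ne hcb]

end IsProbDist

lemma div_lt_one_div_of_le_one {ρb q p : ℝ} (hρb : 0 < ρb) (hq : ρb < q) (hp : p ≤ 1) :
    p / q < 1 / ρb :=
  (div_le_div_of_nonneg_right hp (hρb.trans hq).le).trans_lt (one_div_lt_one_div_of_lt hρb hq)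

lemma le_mul_of_sq_le_mul_of_le_mul {T N Z ω : ℝ} (hω : 0 ≤ ω) (hZ : 0 ≤ Z)
    (hTN : T ^ 2 ≤ N * Z) (hN : N ≤ ω * T) : T ≤ ω * Z := by
  rcases le_or_gt T 0 with hT | hT
  · exact hT.trans (mul_nonneg hω hZ)
  · nlinarith

/-- Mean value theorem for `f'`: the bound `1 / (w f''(w)) ≤ ω` says `f'' ≥ 1 / (ω w)`. -/
lemma sub_le_mul_mul_deriv_sub {f : ℝ → ℝ} {R ω u v : ℝ}
    (hconv : StrictConvexOn ℝ (Set.Ioo 0 R) f)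
    (hdiff : ∀ w ∈ Set.Ioo 0 R, DifferentiableAt ℝ f w ∧ DifferentiableAt ℝ (deriv f) w)
    (hω : ∀ w ∈ Set.Ioo 0 R, 1 / (w * deriv (deriv f) w) ≤ ω)
    (hu : 0 < u) (huv : u ≤ v) (hv : v < R) :
    v - u ≤ ω * v * (deriv f v - deriv f u) := by
  rcases huv.eq_or_lt with rfl | huv
  · simp
  have hsub : Set.Icc u v ⊆ Set.Ioo 0 R := Set.Icc_subset_Ioo hu hv
  obtain ⟨ξ, hξ, hslope⟩ := exists_hasDerivAt_eq_slope (deriv f) (deriv (deriv f)) huv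
    (fun w hw => ((hdiff w (hsub hw)).2).continuousAt.continuousWithinAt)
    fun w hw => ((hdiff w (hsub (Set.Ioo_subset_Icc_self hw))).2).hasDerivAt
  have hmono : deriv f u < deriv f v :=
    hconv.strictMonoOn_deriv (fun w hw => (hdiff w hw).1) (hsub ⟨le_rfl, huv.le⟩)
      (hsub ⟨huv.le, le_rfl⟩) huv
  have hξ0 : 0 < ξ := hu.trans hξ.1
  have hf'' : 0 < deriv (deriv f) ξ := by
    rw [hslope]; exact div_pos (sub_pos.2 hmono) (sub_pos.2 huv)
  have hξω : 1 ≤ ω * ξ * deriv (deriv f) ξ := by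
    have := hω ξ (hsub (Set.Ioo_subset_Icc_self hξ))
    rw [div_le_iff₀ (mul_pos hξ0 hf'')] at this
    linarith
  have hincr : deriv f v - deriv f u = deriv (deriv f) ξ * (v - u) := by
    rw [hslope, div_mul_cancel₀ _ (sub_pos.2 huv).ne']
  have hω0 : 0 ≤ ω := by
    by_contra! h
    nlinarith [mul_pos hξ0 hf'']
  rw [hincr]
  nlinarith [mul_le_mul_of_nonneg_left hξ.2.le (mul_nonneg hω0 hf''.le), sub_pos.2 huv]

lemma sq_sub_le_mul_sub_mul_deriv_sub {f : ℝ → ℝ} {ρb ω qa c d : ℝ} (hρb : 0 < ρb)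
    (hconv : StrictConvexOn ℝ (Set.Ioo 0 (1 / ρb)) f)
    (hdiff : ∀ w ∈ Set.Ioo 0 (1 / ρb), DifferentiableAt ℝ f w ∧ DifferentiableAt ℝ (deriv f) w)
    (hω : ∀ w ∈ Set.Ioo 0 (1 / ρb), 1 / (w * deriv (deriv f) w) ≤ ω)
    (hqa : ρb < qa) (hc : 0 < c) (hc1 : c ≤ 1) (hd : 0 < d) (hd1 : d ≤ 1) :
    (d - c) ^ 2 ≤ ω * ((d - c) * (deriv f (d / qa) - deriv f (c / qa))) := by
  have hq : 0 < qa := hρb.trans hqa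
  wlog hcd : c ≤ d generalizing c d
  · have := this hd hd1 hc hc1 (le_of_not_ge hcd)
    linarith
  have hratio := sub_le_mul_mul_deriv_sub hconv hdiff hω (div_pos hc hq)
    (div_le_div_of_nonneg_right hcd hq.le) (div_lt_one_div_of_le_one hρb hqa hd1)
  rw [← sub_div, mul_div_assoc', div_mul_eq_mul_div, div_le_div_iff_of_pos_right hq] at hratio
  have hΔ : 0 ≤ ω * (deriv f (d / qa) - deriv f (c / qa)) := by nlinarith
  nlinarith [mul_le_mul_of_nonneg_left hd1 hΔ, sub_nonneg.2 hcd]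

def regObj {A : Type*} [Fintype A] (f : ℝ → ℝ) (q x ν : A → ℝ) : ℝ :=
  ∑ a, ν a * x a - fDiv f ν q

lemma regObj_eq_sum {A : Type*} [Fintype A] (f : ℝ → ℝ) (q x ν : A → ℝ) :
    regObj f q x ν = ∑ a, (ν a * x a - q a * f (ν a / q a)) := by
  rw [regObj, fDiv, sum_sub_distrib]

lemma regObj_update_update_sub {A : Type*} [Fintype A] [DecidableEq A] (f : ℝ → ℝ)
    {q : A → ℝ} (x ν : A → ℝ) {a b : A} (hab : a ≠ b) (hqa : q a ≠ 0) (hqb : q b ≠ 0) {s : ℝ}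
    (hs : s ≠ 0) :
    regObj f q x (Function.update (Function.update ν a (ν a + s)) b (ν b - s)) - regObj f q x ν
      = s * (x a - x b - slope f (ν a / q a) ((ν a + s) / q a)
          + slope f ((ν b - s) / q b) (ν b / q b)) := by
  have ha : s * slope f (ν a / q a) ((ν a + s) / q a)
      = q a * (f ((ν a + s) / q a) - f (ν a / q a)) := by
    rw [slope_def_field, show (ν a + s) / q a - ν a / q a = s / q a by ring]
    field_simp
  have hb : s * slope f ((ν b - s) / q b) (ν b / q b)
      = q b * (f (ν b / q b) - f ((ν b - s) / q b)) := by
    rw [slope_def_field, show ν b / q b - (ν b - s) / q b = s / q b by ring]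
    field_simp
  rw [regObj_eq_sum, regObj_eq_sum, ← sum_sub_distrib, Fintype.sum_eq_add a b hab]
  · simp only [Function.update_of_ne hab, Function.update_self]
    linear_combination ha - hb
  · rintro c ⟨hca, hcb⟩
    simp [Function.update_of_ne hca, Function.update_of_ne hcb]

lemma hasDerivAt_regObj_lineMap {A : Type*} [Fintype A] {f : ℝ → ℝ} {q x p m : A → ℝ}
    (hq : ∀ a, q a ≠ 0) (hdiff : ∀ a, DifferentiableAt ℝ f (p a / q a)) :
    HasDerivAt (fun t => regObj f q x fun a => p a + t * (m a - p a))
      (∑ a, (m a - p a) * (x a - deriv f (p a / q a))) 0 := by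
  simp only [regObj_eq_sum]
  refine HasDerivAt.fun_sum fun a _ => ?_
  have hline : HasDerivAt (fun t : ℝ => p a + t * (m a - p a)) (m a - p a) 0 := by
    simpa using ((hasDerivAt_id (0 : ℝ)).mul_const (m a - p a)).const_add (p a)
  have hf : HasDerivAt (fun t => f ((p a + t * (m a - p a)) / q a))
      (deriv f (p a / q a) * ((m a - p a) / q a)) 0 :=
    (hdiff a).hasDerivAt.comp_of_eq 0 (hline.div_const (q a)) (by simp)
  refine ((hline.mul_const (x a)).sub (hf.const_mul (q a))).congr_deriv ?_
  field_simp [hq a]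

namespace IsSoftargmax

variable {A : Type*} [Fintype A] {f : ℝ → ℝ} {ρb : ℝ} {q x y p p' : A → ℝ}

lemma regObj_le (hp : IsSoftargmax f q x p) {m : A → ℝ} (hm : IsProbDist m) :
    regObj f q x m ≤ regObj f q x p :=
  hp.2.1 m hm

/-- Moving mass `s` from an atom `b` of `p` to a point `a` outside its support changes the
objective by `s (x a - x b - slope f 0 (s / q a) + O(1))`, which is positive for small `s`
because `f' → -∞` at `0`. -/
lemma pos (hρb : 0 < ρb) (hconv : ConvexOn ℝ (Set.Icc 0 (1 / ρb)) f)
    (hdiff : ∀ u ∈ Set.Ioo 0 (1 / ρb), DifferentiableAt ℝ f u)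
    (htend : Tendsto (deriv f) (𝓝[>] 0) atBot) (hq : ∀ a, ρb < q a)
    (hp : IsSoftargmax f q x p) (a : A) : 0 < p a := by
  classical
  refine (hp.1.1 a).lt_of_ne fun hpa => ?_
  obtain ⟨b, hb⟩ := hp.1.exists_pos
  have hab : a ≠ b := by rintro rfl; exact hb.ne hpa
  have hqa : 0 < q a := hρb.trans (hq a)
  have hqb : 0 < q b := hρb.trans (hq b)
  set u := p b / q b
  have hu : u ∈ Set.Icc 0 (1 / ρb) :=
    ⟨div_nonneg hb.le hqb.le, (div_lt_one_div_of_le_one hρb (hq b) (hp.1.le_one b)).le⟩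
  have hsteep : ∀ᶠ s in 𝓝[>] 0, deriv f (s / q a) < x a - x b + slope f 0 u := by
    have : Tendsto (fun s => s / q a) (𝓝[>] 0) (𝓝[>] 0) :=
      tendsto_nhdsWithin_iff.2
        ⟨((continuous_id.div_const _).tendsto' 0 0 (zero_div _)).mono_left nhdsWithin_le_nhds,
          eventually_nhdsWithin_of_forall fun s hs => div_pos hs hqa⟩
    exact (htend.comp this).eventually (eventually_lt_atBot _)
  have hsmall : ∀ᶠ s in 𝓝[>] 0, s < p b ∧ s < q a / ρb :=
    ((eventually_lt_nhds hb).and (eventually_lt_nhds (div_pos hqa hρb))).filter_mono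
      nhdsWithin_le_nhds
  obtain ⟨s, hs : 0 < s, hsteep, hsb, hsa⟩ :=
    (eventually_mem_nhdsWithin.and (hsteep.and hsmall)).exists
  have ht : s / q a ∈ Set.Ioo 0 (1 / ρb) := ⟨div_pos hs hqa, by
    rw [div_lt_div_iff₀ hqa hρb, one_mul]; rwa [lt_div_iff₀ hρb] at hsa⟩
  have hslope₀ : slope f (p a / q a) ((p a + s) / q a) ≤ deriv f (s / q a) := by
    rw [← hpa, zero_div, zero_add]
    exact hconv.slope_le_deriv ⟨le_rfl, by positivity⟩ (Set.Ioo_subset_Icc_self ht) ht.1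
      (hdiff _ ht)
  have hslope₁ : slope f 0 u ≤ slope f ((p b - s) / q b) u := by
    have hlt : (p b - s) / q b < u := div_lt_div_of_pos_right (sub_lt_self _ hs) hqb
    have hnonneg : 0 ≤ (p b - s) / q b := div_nonneg (sub_nonneg.2 hsb.le) hqb.le
    rw [slope_comm f 0, slope_comm f ((p b - s) / q b)]
    exact hconv.slope_mono hu ⟨⟨le_rfl, by positivity⟩, (div_pos hb hqb).ne⟩
      ⟨⟨hnonneg, hlt.le.trans hu.2⟩, hlt.ne⟩ hnonneg
  have hgain := regObj_update_update_sub f x p hab hqa.ne' hqb.ne' hs.ne'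
  nlinarith [hp.regObj_le (hp.1.update_update hab hs.le hsb.le)]

lemma sum_sub_mul_sub_deriv_nonpos (hρb : 0 < ρb) (hconv : ConvexOn ℝ (Set.Icc 0 (1 / ρb)) f)
    (hdiff : ∀ u ∈ Set.Ioo 0 (1 / ρb), DifferentiableAt ℝ f u)
    (htend : Tendsto (deriv f) (𝓝[>] 0) atBot) (hq : ∀ a, ρb < q a)
    (hp : IsSoftargmax f q x p) {m : A → ℝ} (hm : IsProbDist m) :
    ∑ a, (m a - p a) * (x a - deriv f (p a / q a)) ≤ 0 := by
  have hder := hasDerivAt_regObj_lineMap (x := x) (m := m)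
    (fun a => (hρb.trans (hq a)).ne') fun a => hdiff _
      ⟨div_pos (hp.pos hρb hconv hdiff htend hq a) (hρb.trans (hq a)),
        div_lt_one_div_of_le_one hρb (hq a) (hp.1.le_one a)⟩
  have hmax : IsMaxOn (fun t => regObj f q x fun a => p a + t * (m a - p a)) (Set.Icc 0 1) 0 :=
    fun t ht => by simpa using hp.regObj_le (hp.1.add_mul_sub hm ht)
  have hdir : (1 : ℝ) ∈ posTangentConeAt (Set.Icc (0 : ℝ) 1) 0 :=
    mem_posTangentConeAt_of_segment_subset (by simp [segment_eq_Icc])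
  simpa using hmax.localize.hasFDerivWithinAt_nonpos hder.hasDerivWithinAt hdir

lemma regObj_sub_le_sum_sub_mul_sub (hp : IsSoftargmax f q y p) (hp' : IsSoftargmax f q x p')
    {m : A → ℝ} (hm : IsProbDist m) :
    regObj f q x m - regObj f q x p ≤ ∑ a, (p' a - p a) * (x a - y a) := by
  have hswap : regObj f q x p' - regObj f q x p - (regObj f q y p' - regObj f q y p)
      = ∑ a, (p' a - p a) * (x a - y a) := by
    simp only [regObj, mul_sub, sub_mul, sum_sub_distrib]
    ring
  linarith [hp'.regObj_le hm, hp.regObj_le hp'.1]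

/-- For `p' = softargmax(x)` the gap is at most `⟨p' - p, ζ⟩`, while the two first-order
conditions and the strong monotonicity of `f'` give `‖p' - p‖² ≤ ω ⟨p' - p, ζ⟩`;
Cauchy–Schwarz combines the two. -/
lemma regObj_sub_le_mul_sum_sq {ω : ℝ} (hρb : 0 < ρb)
    (hconv : StrictConvexOn ℝ (Set.Icc 0 (1 / ρb)) f)
    (hdiff : ∀ u ∈ Set.Ioo 0 (1 / ρb), DifferentiableAt ℝ f u ∧ DifferentiableAt ℝ (deriv f) u)
    (htend : Tendsto (deriv f) (𝓝[>] 0) atBot) (hω0 : 0 ≤ ω)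
    (hω : ∀ u ∈ Set.Ioo 0 (1 / ρb), 1 / (u * deriv (deriv f) u) ≤ ω) (hq : ∀ a, ρb < q a)
    (hp : IsSoftargmax f q y p) (hp' : IsSoftargmax f q x p') {m : A → ℝ} (hm : IsProbDist m)
    (K : ℝ) :
    regObj f q x m - regObj f q x p ≤ ω * ∑ a, (x a - y a - K) ^ 2 := by
  set ζ := fun a => x a - y a - K
  have hpos : ∀ {z ν}, IsSoftargmax f q z ν → ∀ a, 0 < ν a := fun hν =>
    hν.pos hρb hconv.convexOn (fun u hu => (hdiff u hu).1) htend hq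
  have hvi : ∀ {z ν ν'}, IsSoftargmax f q z ν → IsProbDist ν' →
      ∑ a, (ν' a - ν a) * (z a - deriv f (ν a / q a)) ≤ 0 := fun hν hν' =>
    hν.sum_sub_mul_sub_deriv_nonpos hρb hconv.convexOn (fun u hu => (hdiff u hu).1) htend hq hν'
  have hmono : ∑ a, (p' a - p a) * (deriv f (p' a / q a) - deriv f (p a / q a))
      ≤ ∑ a, (p' a - p a) * ζ a := by
    have hsum := add_nonpos (hvi hp hp'.1) (hvi hp' hp.1)
    have hswap : ∑ a, (p' a - p a) * ζ a
        - ∑ a, (p' a - p a) * (deriv f (p' a / q a) - deriv f (p a / q a))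
        = -(∑ a, (p' a - p a) * (y a - deriv f (p a / q a))
          + ∑ a, (p a - p' a) * (x a - deriv f (p' a / q a))) := by
      rw [hp.1.sum_sub_mul_sub_const hp'.1, ← sum_sub_distrib, ← sum_add_distrib,
        ← sum_neg_distrib]
      exact sum_congr rfl fun a _ => by ring
    linarith
  have hstrong : ∑ a, (p' a - p a) ^ 2 ≤ ω * ∑ a, (p' a - p a) * ζ a := by
    refine le_trans ?_ (mul_le_mul_of_nonneg_left hmono hω0)
    rw [mul_sum]
    exact sum_le_sum fun a _ => sq_sub_le_mul_sub_mul_deriv_sub hρb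
      (hconv.subset Set.Ioo_subset_Icc_self (convex_Ioo _ _)) hdiff hω (hq a) (hpos hp a)
      (hp.1.le_one a) (hpos hp' a) (hp'.1.le_one a)
  calc regObj f q x m - regObj f q x p ≤ ∑ a, (p' a - p a) * ζ a := by
        rw [hp.1.sum_sub_mul_sub_const hp'.1]; exact regObj_sub_le_sum_sub_mul_sub hp hp' hm
    _ ≤ ω * ∑ a, ζ a ^ 2 :=
        le_mul_of_sq_le_mul_of_le_mul hω0 (sum_nonneg fun a _ => sq_nonneg _)
          (sum_mul_sq_le_sq_mul_sq _ _ _) hstrong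

end IsSoftargmax

section MDP

variable {S A : Type*} [Fintype S] [Fintype A] {P : S → A → S → ℝ} {γ : ℝ} {π : S → A → ℝ}

lemma IsRegValue.eq_mul_regObj_add {r : S → A → ℝ} {lam : ℝ} {f : ℝ → ℝ} {pref : S → A → ℝ}
    {V : S → ℝ} (hV : IsRegValue P r γ lam f pref π V) (hlam : lam ≠ 0) (W : S → ℝ) (s : S) :
    V s = lam * regObj f (pref s) (fun a => Qval P r γ W s a / lam) (π s)
      + γ * ∑ a, π s a * ∑ s', P s a s' * (V s' - W s') := by
  have hQ : lam * ∑ a, π s a * (Qval P r γ W s a / lam)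
      = ∑ a, π s a * r s a + γ * ∑ a, π s a * ∑ s', P s a s' * W s' := by
    rw [mul_sum, mul_sum, ← sum_add_distrib]
    exact sum_congr rfl fun a _ => by rw [Qval]; field_simp
  have hVW : ∑ a, π s a * ∑ s', P s a s' * (V s' - W s')
      = ∑ a, π s a * ∑ s', P s a s' * V s' - ∑ a, π s a * ∑ s', P s a s' * W s' := by
    simp only [mul_sub, sum_sub_distrib]
  rw [hV s, regObj, mul_sub, hQ, hVW]
  ring

/-- Evaluating the inequality at a maximizer of `Δ` contracts it by `γ`. -/
lemma le_sum_div_one_sub_of_forall_le_add_mul (hπ : IsPolicy π)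
    (hP : ∀ s a, IsProbDist (P s a)) (hγ0 : 0 ≤ γ) (hγ1 : γ < 1) {E Δ : S → ℝ}
    (hE : ∀ s, 0 ≤ E s) (h : ∀ s, Δ s ≤ E s + γ * ∑ a, π s a * ∑ s', P s a s' * Δ s')
    (s : S) : Δ s ≤ (∑ s', E s') / (1 - γ) := by
  obtain ⟨s₀, -, hs₀⟩ := exists_max_image univ Δ ⟨s, mem_univ s⟩
  have hmax : ∀ s', Δ s' ≤ Δ s₀ := fun s' => hs₀ s' (mem_univ s')
  have havg : ∑ a, π s₀ a * ∑ s', P s₀ a s' * Δ s' ≤ Δ s₀ :=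
    (hπ s₀).sum_mul_le fun a => (hP s₀ a).sum_mul_le hmax
  have hE₀ : E s₀ ≤ ∑ s', E s' := single_le_sum (fun s' _ => hE s') (mem_univ s₀)
  rw [le_div_iff₀ (sub_pos.2 hγ1)]
  nlinarith [h s₀, hmax s]

end MDP

theorem stmt9_general {S A : Type*} [Fintype S] [Fintype A]
    (ρb ωf κf ιf : ℝ) (hρb : 0 < ρb)
    (f : ℝ → ℝ) (hAF : AF f ρb ωf κf ιf)
    (γ : ℝ) (hγ : γ ∈ Set.Ioo (0:ℝ) 1)
    (P : S → A → S → ℝ) (hP : ∀ s a, IsProbDist (P s a))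
    (r : S → A → ℝ)
    (ρ : S → ℝ) (hρ : IsProbDist ρ)
    (pref : S → A → ℝ) (hprefb : ∀ s a, ρb < pref s a)
    (lam : ℝ) (hlam : 0 < lam)
    (sfa : ((S × A) → ℝ) → S → A → ℝ)
    (hsfa : ∀ θ s, IsSoftargmax f (pref s) (fun a => θ (s, a)) (sfa θ s))
    (Vof : ((S × A) → ℝ) → S → ℝ)
    (hV : ∀ θ, IsRegValue P r γ lam f pref (sfa θ) (Vof θ))
    (Vstar : S → ℝ) (hVstar : IsOptRegValue P r γ lam f pref Vstar) :
    ∀ θ : (S × A) → ℝ,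
      (∑ s, ρ s * Vstar s) - (∑ s, ρ s * Vof θ s) ≤
        lam * ωf / (1 - γ) *
          ∑ s, ∑ a,
            (Qval P r γ (Vof θ) s a / lam - θ (s, a) -
              (∑ b, (Qval P r γ (Vof θ) s b / lam - θ (s, b))) / (Fintype.card A : ℝ)) ^ 2 := by
  intro θ
  obtain ⟨-, hconv, -, hdiff, htend, -, hω1, -, hbnd, -⟩ := hAF
  obtain ⟨πopt, hπopt, hVopt⟩ := hVstar.1
  have hω0 : 0 ≤ ωf := zero_le_one.trans hω1
  set E : S → ℝ := fun s => lam * (ωf * ∑ a, (Qval P r γ (Vof θ) s a / lam - θ (s, a) -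
    (∑ b, (Qval P r γ (Vof θ) s b / lam - θ (s, b))) / (Fintype.card A : ℝ)) ^ 2)
  have hgap : ∀ s, Vstar s - Vof θ s
      ≤ E s + γ * ∑ a, πopt s a * ∑ s', P s a s' * (Vstar s' - Vof θ s') := by
    intro s
    have hregret := (hsfa θ s).regObj_sub_le_mul_sum_sq hρb hconv
      (fun u hu => ⟨(hdiff u hu).1, (hdiff u hu).2.1⟩) htend hω0
      (fun u hu => (hbnd u (Set.Ioo_subset_Ioc_self hu)).1) (hprefb s)
      (hsfa (fun sa => Qval P r γ (Vof θ) sa.1 sa.2 / lam) s) (hπopt s)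
      ((∑ b, (Qval P r γ (Vof θ) s b / lam - θ (s, b))) / (Fintype.card A : ℝ))
    have hopt := hVopt.eq_mul_regObj_add hlam.ne' (Vof θ) s
    have hcur := (hV θ).eq_mul_regObj_add hlam.ne' (Vof θ) s
    simp only [sub_self, mul_zero, sum_const_zero, add_zero] at hcur
    linarith [mul_le_mul_of_nonneg_left hregret hlam.le]
  have hE : ∀ s, 0 ≤ E s := fun s =>
    mul_nonneg hlam.le (mul_nonneg hω0 (sum_nonneg fun a _ => sq_nonneg _))
  calc (∑ s, ρ s * Vstar s) - (∑ s, ρ s * Vof θ s) = ∑ s, ρ s * (Vstar s - Vof θ s) := by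
        simp only [mul_sub, sum_sub_distrib]
    _ ≤ (∑ s, E s) / (1 - γ) := hρ.sum_mul_le
        (le_sum_div_one_sub_of_forall_le_add_mul hπopt hP hγ.1.le hγ.2 hE hgap)
    _ = _ := by simp only [E, ← mul_sum]; ring

theorem stmt9 {S A : Type*} [Fintype S] [Fintype A] [Nonempty S] [Nonempty A]
    (ρb ωf κf ιf : ℝ) (hρb : 0 < ρb)
    (f : ℝ → ℝ) (hAF : AF f ρb ωf κf ιf)
    (γ : ℝ) (hγ : γ ∈ Set.Ioo (0:ℝ) 1)
    (P : S → A → S → ℝ) (hP : ∀ s a, IsProbDist (P s a))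
    (r : S → A → ℝ) (hr : ∀ s a, r s a ∈ Set.Icc (0:ℝ) 1)
    (ρ : S → ℝ) (hρ : IsProbDist ρ)
    (pref : S → A → ℝ) (hpref : IsPolicy pref) (hprefb : ∀ s a, ρb < pref s a)
    (lam : ℝ) (hlam : 0 < lam)
    (sfa : ((S × A) → ℝ) → S → A → ℝ)
    (hsfa : ∀ θ s, IsSoftargmax f (pref s) (fun a => θ (s, a)) (sfa θ s))
    (Vof : ((S × A) → ℝ) → S → ℝ)
    (hV : ∀ θ, IsRegValue P r γ lam f pref (sfa θ) (Vof θ))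
    (Vstar : S → ℝ) (hVstar : IsOptRegValue P r γ lam f pref Vstar) :
    ∀ θ : (S × A) → ℝ,
      (∑ s, ρ s * Vstar s) - (∑ s, ρ s * Vof θ s) ≤
        lam * ωf / (1 - γ) *
          ∑ s, ∑ a,
            (Qval P r γ (Vof θ) s a / lam - θ (s, a) -
              (∑ b, (Qval P r γ (Vof θ) s b / lam - θ (s, b))) / (Fintype.card A : ℝ)) ^ 2 :=
  stmt9_general ρb ωf κf ιf hρb f hAF γ hγ P hP r ρ hρ pref hprefb lam hlam sfa hsfa Vof hV Vstar
    hVstar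
end
end

section
/- Consider a discounted MDP with finite state space S, finite action space A, discount γ ∈ (0,1), transition kernel P, and initial distribution ρ. For any two policies π₁ and π₂: ∑_{s∈S} |d^{π₁}_ρ(s) − d^{π₂}_ρ(s)| ≤ (γ/(1−γ))·max_{s∈S} ∑_{a∈A} |π₁(a|s) − π₂(a|s)|. -/
open Finset Filter MeasureTheory

noncomputable section

section Aux

variable {S A : Type*} [Fintype S] [Fintype A]
variable (P : S → A → S → ℝ) (π : S → A → ℝ) (ρ : S → ℝ)

lemma w_nonneg (hP : ∀ s a, IsProbDist (P s a)) (hπ : IsPolicy π) (u s : S) :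
    0 ≤ ∑ a, π u a * P u a s :=
  Finset.sum_nonneg fun a _ => mul_nonneg ((hπ u).1 a) ((hP u a).1 s)

lemma w_sum (hP : ∀ s a, IsProbDist (P s a)) (hπ : IsPolicy π) (u : S) :
    ∑ s, ∑ a, π u a * P u a s = 1 := by
  rw [Finset.sum_comm]
  simp_rw [← Finset.mul_sum]
  calc ∑ a, π u a * ∑ s, P u a s = ∑ a, π u a := by
        refine Finset.sum_congr rfl fun a _ => ?_
        rw [(hP u a).2, mul_one]
    _ = 1 := (hπ u).2

lemma iter_nonneg (hP : ∀ s a, IsProbDist (P s a)) (hπ : IsPolicy π)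
    (hρ : ∀ s, 0 ≤ ρ s) (t : ℕ) (s : S) :
    0 ≤ ((fun (m : S → ℝ) (s' : S) => ∑ u, m u * ∑ a, π u a * P u a s')^[t] ρ) s := by
  induction t generalizing s with
  | zero => simpa using hρ s
  | succ t ih =>
    rw [Function.iterate_succ_apply']
    exact Finset.sum_nonneg fun u _ => mul_nonneg (ih u) (w_nonneg P π hP hπ u s)

lemma iter_sum (hP : ∀ s a, IsProbDist (P s a)) (hπ : IsPolicy π)
    (hρ : ∑ s, ρ s = 1) (t : ℕ) :
    ∑ s, ((fun (m : S → ℝ) (s' : S) => ∑ u, m u * ∑ a, π u a * P u a s')^[t] ρ) s = 1 := by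
  induction t with
  | zero => simpa using hρ
  | succ t ih =>
    simp_rw [Function.iterate_succ_apply']
    rw [Finset.sum_comm]
    simp_rw [← Finset.mul_sum]
    calc ∑ u, _ * ∑ s, ∑ a, π u a * P u a s
        = ∑ u, ((fun (m : S → ℝ) (s' : S) => ∑ u, m u * ∑ a, π u a * P u a s')^[t] ρ) u := by
          refine Finset.sum_congr rfl fun u _ => ?_
          rw [w_sum P π hP hπ u, mul_one]
      _ = 1 := ih

lemma dOcc_summable {γ : ℝ} (hγ : γ ∈ Set.Ioo (0:ℝ) 1)
    (hP : ∀ s a, IsProbDist (P s a)) (hπ : IsPolicy π) (hρ : IsProbDist ρ) (s : S) :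
    Summable (fun t : ℕ =>
      γ ^ t * ((fun (m : S → ℝ) (s' : S) => ∑ u, m u * ∑ a, π u a * P u a s')^[t] ρ) s) := by
  apply Summable.of_nonneg_of_le
    (fun t => mul_nonneg (pow_nonneg hγ.1.le t) (iter_nonneg P π ρ hP hπ hρ.1 t s))
    (fun t => ?_) (summable_geometric_of_lt_one hγ.1.le hγ.2)
  have hle : ((fun (m : S → ℝ) (s' : S) => ∑ u, m u * ∑ a, π u a * P u a s')^[t] ρ) s ≤ 1 := by
    rw [← iter_sum P π ρ hP hπ hρ.2 t]
    exact Finset.single_le_sum (f := fun s => _) (fun u _ => iter_nonneg P π ρ hP hπ hρ.1 t u)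
      (Finset.mem_univ s)
  calc γ ^ t * _ ≤ γ ^ t * 1 := by
        exact mul_le_mul_of_nonneg_left hle (pow_nonneg hγ.1.le t)
    _ = γ ^ t := mul_one _

lemma dOcc_nonneg {γ : ℝ} (hγ : γ ∈ Set.Ioo (0:ℝ) 1)
    (hP : ∀ s a, IsProbDist (P s a)) (hπ : IsPolicy π) (hρ : IsProbDist ρ) (s : S) :
    0 ≤ dOcc P γ ρ π s := by
  refine mul_nonneg (by linarith [hγ.2]) (tsum_nonneg fun t =>
    mul_nonneg (pow_nonneg hγ.1.le t) (iter_nonneg P π ρ hP hπ hρ.1 t s))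

lemma dOcc_sum {γ : ℝ} (hγ : γ ∈ Set.Ioo (0:ℝ) 1)
    (hP : ∀ s a, IsProbDist (P s a)) (hπ : IsPolicy π) (hρ : IsProbDist ρ) :
    ∑ s, dOcc P γ ρ π s = 1 := by
  unfold dOcc
  rw [← Finset.mul_sum]
  rw [← Summable.tsum_finsetSum (fun s _ => dOcc_summable P π ρ hγ hP hπ hρ s)]
  have : ∀ t : ℕ, ∑ s, γ ^ t *
      ((fun (m : S → ℝ) (s' : S) => ∑ u, m u * ∑ a, π u a * P u a s')^[t] ρ) s = γ ^ t := by
    intro t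
    rw [← Finset.mul_sum, iter_sum P π ρ hP hπ hρ.2 t, mul_one]
  simp_rw [this]
  rw [tsum_geometric_of_lt_one hγ.1.le hγ.2]
  rw [mul_inv_cancel₀ (by linarith [hγ.2] : (1:ℝ) - γ ≠ 0)]

lemma dOcc_fixed {γ : ℝ} (hγ : γ ∈ Set.Ioo (0:ℝ) 1)
    (hP : ∀ s a, IsProbDist (P s a)) (hπ : IsPolicy π) (hρ : IsProbDist ρ) (s : S) :
    dOcc P γ ρ π s = (1 - γ) * ρ s + γ * ∑ u, dOcc P γ ρ π u * ∑ a, π u a * P u a s := by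
  set g : ℕ → S → ℝ :=
    fun t => (fun (m : S → ℝ) (s' : S) => ∑ u, m u * ∑ a, π u a * P u a s')^[t] ρ with hg
  have hsum : ∀ u : S, Summable (fun t : ℕ => γ ^ t * g t u) :=
    fun u => dOcc_summable P π ρ hγ hP hπ hρ u
  have key : ∑' t : ℕ, γ ^ t * g t s
      = ρ s + ∑ u, (γ * ∑' t : ℕ, γ ^ t * g t u) * ∑ a, π u a * P u a s := by
    rw [Summable.tsum_eq_zero_add (hsum s)]
    congr 1
    · simp [hg]
    have hsucc : ∀ t : ℕ, γ ^ (t+1) * g (t+1) s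
        = ∑ u, (γ * (γ ^ t * g t u)) * ∑ a, π u a * P u a s := by
      intro t
      have : g (t+1) s = ∑ u, g t u * ∑ a, π u a * P u a s := by
        simp only [hg, Function.iterate_succ_apply']
      rw [this, Finset.mul_sum]
      refine Finset.sum_congr rfl fun u _ => ?_
      ring
    simp_rw [hsucc]
    rw [Summable.tsum_finsetSum (fun u _ => (((hsum u).mul_left γ).mul_right _))]
    refine Finset.sum_congr rfl fun u _ => ?_
    rw [tsum_mul_right, tsum_mul_left]
  show (1 - γ) * ∑' t : ℕ, γ ^ t * g t s = _
  rw [key, mul_add]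
  congr 1
  unfold dOcc
  rw [Finset.mul_sum, Finset.mul_sum]
  refine Finset.sum_congr rfl fun u _ => ?_
  ring

end Aux

theorem stmt16 {S A : Type*} [Fintype S] [Fintype A] [Nonempty S] [Nonempty A]
    (γ : ℝ) (hγ : γ ∈ Set.Ioo (0:ℝ) 1)
    (P : S → A → S → ℝ) (hP : ∀ s a, IsProbDist (P s a))
    (ρ : S → ℝ) (hρ : IsProbDist ρ)
    (π₁ π₂ : S → A → ℝ) (h₁ : IsPolicy π₁) (h₂ : IsPolicy π₂) :
    ∑ s, |dOcc P γ ρ π₁ s - dOcc P γ ρ π₂ s| ≤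
      γ / (1 - γ) *
        Finset.univ.sup' Finset.univ_nonempty (fun s => ∑ a, |π₁ s a - π₂ s a|) := by
  set d1 : S → ℝ := dOcc P γ ρ π₁ with hd1
  set d2 : S → ℝ := dOcc P γ ρ π₂ with hd2
  set w1 : S → S → ℝ := fun u s => ∑ a, π₁ u a * P u a s with hw1
  set w2 : S → S → ℝ := fun u s => ∑ a, π₂ u a * P u a s with hw2
  set Δ : ℝ := Finset.univ.sup' Finset.univ_nonempty (fun s => ∑ a, |π₁ s a - π₂ s a|) with hΔdef
  set D : ℝ := ∑ s, |d1 s - d2 s| with hDdef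
  have hΔ : ∀ u : S, ∑ a, |π₁ u a - π₂ u a| ≤ Δ :=
    fun u => Finset.le_sup' (fun s => ∑ a, |π₁ s a - π₂ s a|) (Finset.mem_univ u)
  have hγ1 : (0:ℝ) < 1 - γ := by linarith [hγ.2]
  have hdiff : ∀ s, d1 s - d2 s
      = γ * ∑ u, ((d1 u - d2 u) * w1 u s + d2 u * (w1 u s - w2 u s)) := by
    intro s
    rw [hd1, hd2, dOcc_fixed P π₁ ρ hγ hP h₁ hρ s, dOcc_fixed P π₂ ρ hγ hP h₂ hρ s]
    have : ∑ u, ((d1 u - d2 u) * w1 u s + d2 u * (w1 u s - w2 u s))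
        = ∑ u, d1 u * w1 u s - ∑ u, d2 u * w2 u s := by
      rw [← Finset.sum_sub_distrib]
      refine Finset.sum_congr rfl fun u _ => ?_
      ring
    rw [this]
    ring
  have habs : ∀ s, |d1 s - d2 s|
      ≤ γ * ∑ u, (|d1 u - d2 u| * w1 u s + d2 u * ∑ a, |π₁ u a - π₂ u a| * P u a s) := by
    intro s
    rw [hdiff s, abs_mul, abs_of_nonneg hγ.1.le]
    refine mul_le_mul_of_nonneg_left ?_ hγ.1.le
    refine (Finset.abs_sum_le_sum_abs _ _).trans (Finset.sum_le_sum fun u _ => ?_)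
    refine (abs_add_le _ _).trans (add_le_add ?_ ?_)
    · rw [abs_mul, abs_of_nonneg (w_nonneg P π₁ hP h₁ u s)]
    · rw [abs_mul, abs_of_nonneg (dOcc_nonneg P π₂ ρ hγ hP h₂ hρ u)]
      refine mul_le_mul_of_nonneg_left ?_ (dOcc_nonneg P π₂ ρ hγ hP h₂ hρ u)
      have : w1 u s - w2 u s = ∑ a, (π₁ u a - π₂ u a) * P u a s := by
        rw [hw1, hw2]
        rw [← Finset.sum_sub_distrib]
        exact Finset.sum_congr rfl fun a _ => by ring
      rw [this]
      refine (Finset.abs_sum_le_sum_abs _ _).trans (Finset.sum_le_sum fun a _ => ?_)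
      rw [abs_mul, abs_of_nonneg ((hP u a).1 s)]
  have hDle : D ≤ γ * (D + Δ) := by
    calc D ≤ ∑ s, γ * ∑ u, (|d1 u - d2 u| * w1 u s
              + d2 u * ∑ a, |π₁ u a - π₂ u a| * P u a s) :=
          Finset.sum_le_sum fun s _ => habs s
      _ = γ * ∑ s, ∑ u, (|d1 u - d2 u| * w1 u s
              + d2 u * ∑ a, |π₁ u a - π₂ u a| * P u a s) := by rw [Finset.mul_sum]
      _ = γ * (∑ u, ∑ s, |d1 u - d2 u| * w1 u s
              + ∑ u, ∑ s, d2 u * ∑ a, |π₁ u a - π₂ u a| * P u a s) := by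
          rw [Finset.sum_comm]
          rw [← Finset.sum_add_distrib]
          congr 1
          exact Finset.sum_congr rfl fun u _ => by rw [Finset.sum_add_distrib]
      _ ≤ γ * (D + Δ) := by
          refine mul_le_mul_of_nonneg_left (add_le_add ?_ ?_) hγ.1.le
          · have : ∀ u : S, ∑ s, |d1 u - d2 u| * w1 u s = |d1 u - d2 u| := by
              intro u
              rw [← Finset.mul_sum, w_sum P π₁ hP h₁ u, mul_one]
            rw [hDdef]
            exact le_of_eq (Finset.sum_congr rfl fun u _ => this u)
          · have heq : ∀ u : S, ∑ s, d2 u * ∑ a, |π₁ u a - π₂ u a| * P u a s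
                = d2 u * ∑ a, |π₁ u a - π₂ u a| := by
              intro u
              rw [← Finset.mul_sum]
              congr 1
              rw [Finset.sum_comm]
              refine Finset.sum_congr rfl fun a _ => ?_
              rw [← Finset.mul_sum, (hP u a).2, mul_one]
            calc ∑ u, ∑ s, d2 u * ∑ a, |π₁ u a - π₂ u a| * P u a s
                = ∑ u, d2 u * ∑ a, |π₁ u a - π₂ u a| :=
                  Finset.sum_congr rfl fun u _ => heq u
              _ ≤ ∑ u, d2 u * Δ := Finset.sum_le_sum fun u _ =>
                  mul_le_mul_of_nonneg_left (hΔ u) (dOcc_nonneg P π₂ ρ hγ hP h₂ hρ u)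
              _ = Δ := by rw [← Finset.sum_mul, hd2, dOcc_sum P π₂ ρ hγ hP h₂ hρ, one_mul]
  rw [div_mul_eq_mul_div, le_div_iff₀ hγ1]
  nlinarith [hDle]

end
end

section
/- Let f be a strictly convex generator with f(1)=0 and let π_ref be a full-support reference policy and λ ≥ 0. Let π* be an optimal f-regularized policy (i.e., V^{π*}_λ(s) = V*_λ(s) for all s). Then for any policy π with full support: V*_λ(ρ) − V^π_λ(ρ) = (1/(1−γ)) ∑_{s∈S} d^{π*}_ρ(s)·[ ∑_{a∈A} π*(a|s)·Q^π_λ(s,a) − λ·D_f(π*(·|s)‖π_ref(·|s)) − V^π_λ(s) ], where Q^π_λ(s,a) := r(s,a) + γ∑_{s'}P(s'|s,a)V^π_λ(s'). -/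
open Finset Filter MeasureTheory

noncomputable section

/-
Put `g := V* - V^π`. The Bellman equation of `π*` rewrites the bracket on the right as
`g - γ P_{π*} g`. Weighting it by `γ^t ρᵀ P_{π*}^t` and summing over
`t`, the series telescopes to `ρᵀ g`; the tail vanishes because `P_{π*}` does not increase the
`ℓ¹` norm of a signed measure and `|γ| < 1`.
-/

open Topology

theorem tsum_sub_succ_eq_of_tendsto_zero {G : Type*} [AddCommGroup G] [TopologicalSpace G]
    [IsTopologicalAddGroup G] [T2Space G] {c : ℕ → G}
    (hs : Summable fun t => c t - c (t + 1)) (hc : Tendsto c atTop (𝓝 0)) :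
    ∑' t, (c t - c (t + 1)) = c 0 := by
  refine tendsto_nhds_unique hs.hasSum.tendsto_sum_nat ?_
  simp only [sum_range_sub']
  simpa using hc.const_sub (c 0)

section Occupancy

variable {S A : Type*} [Fintype S] [Fintype A] (P : S → A → S → ℝ) (π : S → A → ℝ)

/-- `m ↦ mᵀ P_π`, the step iterated in `dOcc`. -/
def stateStep (m : S → ℝ) (s' : S) : ℝ :=
  ∑ u, m u * ∑ a, π u a * P u a s'

/-- `g ↦ P_π g`. -/
def expectNext (g : S → ℝ) (s : S) : ℝ :=
  ∑ a, π s a * ∑ s', P s a s' * g s'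

theorem sum_stateStep_mul (m g : S → ℝ) :
    ∑ s, stateStep P π m s * g s = ∑ s, m s * expectNext P π g s := by
  simp only [stateStep, expectNext, sum_mul, mul_sum]
  rw [sum_comm]
  refine sum_congr rfl fun u _ => ?_
  rw [sum_comm]
  exact sum_congr rfl fun a _ => sum_congr rfl fun s' _ => by ring

variable {P π}

theorem expectNext_one (hP : ∀ s a, IsProbDist (P s a)) (hπ : IsPolicy π) (s : S) :
    expectNext P π 1 s = 1 := by
  simp [expectNext, (hP _ _).2, (hπ s).2]

theorem sum_abs_stateStep_le (hP : ∀ s a, IsProbDist (P s a)) (hπ : IsPolicy π) (m : S → ℝ) :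
    ∑ s, |stateStep P π m s| ≤ ∑ s, |m s| := by
  have hweight : ∀ u s', 0 ≤ ∑ a, π u a * P u a s' := fun u s' =>
    sum_nonneg fun a _ => mul_nonneg ((hπ u).1 a) ((hP u a).1 s')
  calc ∑ s', |stateStep P π m s'|
      ≤ ∑ s', ∑ u, |m u| * ∑ a, π u a * P u a s' := by
        refine sum_le_sum fun s' _ => (abs_sum_le_sum_abs _ _).trans_eq ?_
        simp only [abs_mul, abs_of_nonneg (hweight _ s')]
    _ = ∑ s, |m s| := by
        simpa [stateStep, expectNext_one hP hπ] using sum_stateStep_mul P π (fun u => |m u|) 1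

theorem abs_iterate_stateStep_le (hP : ∀ s a, IsProbDist (P s a)) (hπ : IsPolicy π)
    (m : S → ℝ) (t : ℕ) (s : S) :
    |(stateStep P π)^[t] m s| ≤ ∑ s, |m s| := by
  have hl1 : ∑ s, |(stateStep P π)^[t] m s| ≤ ∑ s, |m s| := by
    induction t with
    | zero => rfl
    | succ t ih =>
      rw [Function.iterate_succ_apply']
      exact (sum_abs_stateStep_le hP hπ _).trans ih
  exact (single_le_sum (fun s _ => abs_nonneg _) (mem_univ s)).trans hl1

theorem sum_mul_eq_sum_tsum_mul (hP : ∀ s a, IsProbDist (P s a)) (hπ : IsPolicy π)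
    {γ : ℝ} (hγ : |γ| < 1) (ρ g : S → ℝ) :
    ∑ s, ρ s * g s = ∑ s, (∑' t : ℕ, γ ^ t * (stateStep P π)^[t] ρ s) *
      (g s - γ * expectNext P π g s) := by
  set μ : ℕ → S → ℝ := fun t => (stateStep P π)^[t] ρ
  set B := ∑ s, |ρ s|
  set c : ℕ → ℝ := fun t => γ ^ t * ∑ s, μ t s * g s
  have hμ : ∀ t s, |μ t s| ≤ B := abs_iterate_stateStep_le hP hπ ρ
  have hsummable : ∀ s, Summable fun t => γ ^ t * μ t s := fun s =>
    .of_norm_bounded ((summable_geometric_of_abs_lt_one hγ).abs.mul_right B) fun t => by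
      rw [Real.norm_eq_abs, abs_mul]
      exact mul_le_mul_of_nonneg_left (hμ t s) (abs_nonneg _)
  have htelescope : ∀ t, ∑ s, γ ^ t * μ t s * (g s - γ * expectNext P π g s) = c t - c (t + 1) := by
    intro t
    have hnext : ∑ s, μ (t + 1) s * g s = ∑ s, μ t s * expectNext P π g s := by
      simp only [μ, Function.iterate_succ_apply', sum_stateStep_mul]
    change _ = γ ^ t * ∑ s, μ t s * g s - γ ^ (t + 1) * ∑ s, μ (t + 1) s * g s
    rw [hnext, mul_sum, mul_sum, ← sum_sub_distrib]
    exact sum_congr rfl fun s _ => by ring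
  have hc : Tendsto c atTop (𝓝 0) := by
    have hgeom := (tendsto_pow_atTop_nhds_zero_of_abs_lt_one hγ).abs.mul_const (B * ∑ s, |g s|)
    rw [abs_zero, zero_mul] at hgeom
    refine squeeze_zero_norm (fun t => ?_) hgeom
    rw [Real.norm_eq_abs, abs_mul]
    refine mul_le_mul_of_nonneg_left ?_ (abs_nonneg _)
    calc |∑ s, μ t s * g s| ≤ ∑ s, |μ t s| * |g s| := by
          simpa only [abs_mul] using abs_sum_le_sum_abs (fun s => μ t s * g s) univ
      _ ≤ ∑ s, B * |g s| := sum_le_sum fun s _ =>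
          mul_le_mul_of_nonneg_right (hμ t s) (abs_nonneg _)
      _ = B * ∑ s, |g s| := (mul_sum _ _ _).symm
  calc ∑ s, ρ s * g s = c 0 := by simp [c, μ]
    _ = ∑' t, ∑ s, γ ^ t * μ t s * (g s - γ * expectNext P π g s) := by
      simp only [htelescope]
      refine (tsum_sub_succ_eq_of_tendsto_zero ?_ hc).symm
      simp only [← htelescope]
      exact summable_sum fun s _ => (hsummable s).mul_right _
    _ = _ := by
      rw [Summable.tsum_finsetSum fun s _ => (hsummable s).mul_right _]
      simp only [tsum_mul_right, μ]

theorem IsRegValue.sum_mul_Qval_sub_eq {r : S → A → ℝ} {γ lam : ℝ} {f : ℝ → ℝ}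
    {pref : S → A → ℝ} {V : S → ℝ} (hV : IsRegValue P r γ lam f pref π V) (W : S → ℝ) (s : S) :
    (∑ a, π s a * Qval P r γ W s a) - lam * fDiv f (π s) (pref s) - W s =
      (V s - W s) - γ * expectNext P π (fun s => V s - W s) s := by
  have hQ : ∑ a, π s a * Qval P r γ W s a = ∑ a, π s a * r s a + γ * expectNext P π W s := by
    simp only [Qval, expectNext, mul_add, sum_add_distrib, mul_sum, mul_left_comm γ]
  have hsub : expectNext P π (fun s => V s - W s) s = expectNext P π V s - expectNext P π W s := by
    simp only [expectNext, mul_sub, sum_sub_distrib]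
  rw [hQ, hsub, hV s]
  unfold expectNext
  ring

end Occupancy

theorem stmt17_general {S A : Type*} [Fintype S] [Fintype A]
    (γ : ℝ) (hγ : γ ∈ Set.Ioo (0:ℝ) 1)
    (P : S → A → S → ℝ) (hP : ∀ s a, IsProbDist (P s a))
    (r : S → A → ℝ)
    (ρ : S → ℝ)
    (f : ℝ → ℝ)
    (pref : S → A → ℝ)
    (lam : ℝ)
    (Vstar : S → ℝ)
    (πstar : S → A → ℝ) (hπstar : IsPolicy πstar)
    (hπstarVal : IsRegValue P r γ lam f pref πstar Vstar)
    (Vπ : S → ℝ) :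
    (∑ s, ρ s * Vstar s) - (∑ s, ρ s * Vπ s) =
      (1 / (1 - γ)) * ∑ s, dOcc P γ ρ πstar s *
        ((∑ a, πstar s a * Qval P r γ Vπ s a) -
          lam * fDiv f (πstar s) (pref s) - Vπ s) := by
  have hγ_abs : |γ| < 1 := abs_lt.2 ⟨by linarith [hγ.1], hγ.2⟩
  have hγ_ne : 1 - γ ≠ 0 := by linarith [hγ.2]
  calc (∑ s, ρ s * Vstar s) - (∑ s, ρ s * Vπ s) = ∑ s, ρ s * (Vstar s - Vπ s) := by
        simp only [mul_sub, sum_sub_distrib]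
    _ = ∑ s, (∑' t : ℕ, γ ^ t * (stateStep P πstar)^[t] ρ s) *
          ((Vstar s - Vπ s) - γ * expectNext P πstar (fun s => Vstar s - Vπ s) s) :=
        sum_mul_eq_sum_tsum_mul hP hπstar hγ_abs ρ _
    _ = _ := by
        simp only [hπstarVal.sum_mul_Qval_sub_eq, dOcc, mul_assoc, ← mul_sum, one_div,
          inv_mul_cancel_left₀ hγ_ne]
        rfl

theorem stmt17 {S A : Type*} [Fintype S] [Fintype A] [Nonempty S] [Nonempty A]
    (γ : ℝ) (hγ : γ ∈ Set.Ioo (0:ℝ) 1)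
    (P : S → A → S → ℝ) (hP : ∀ s a, IsProbDist (P s a))
    (r : S → A → ℝ) (hr : ∀ s a, r s a ∈ Set.Icc (0:ℝ) 1)
    (ρ : S → ℝ) (hρ : IsProbDist ρ)
    (f : ℝ → ℝ) (hconv : StrictConvexOn ℝ (Set.Ioi (0:ℝ)) f) (hf1 : f 1 = 0)
    (pref : S → A → ℝ) (hpref : IsPolicy pref) (hpreffull : ∀ s a, 0 < pref s a)
    (lam : ℝ) (hlam : 0 ≤ lam)
    (Vstar : S → ℝ) (hVstarOpt : IsOptRegValue P r γ lam f pref Vstar)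
    (πstar : S → A → ℝ) (hπstar : IsPolicy πstar)
    (hπstarVal : IsRegValue P r γ lam f pref πstar Vstar)
    (π : S → A → ℝ) (hπ : IsPolicy π) (hπfull : ∀ s a, 0 < π s a)
    (Vπ : S → ℝ) (hVπ : IsRegValue P r γ lam f pref π Vπ) :
    (∑ s, ρ s * Vstar s) - (∑ s, ρ s * Vπ s) =
      (1 / (1 - γ)) * ∑ s, dOcc P γ ρ πstar s *
        ((∑ a, πstar s a * Qval P r γ Vπ s a) -
          lam * fDiv f (πstar s) (pref s) - Vπ s) :=
  stmt17_general γ hγ P hP r ρ f pref lam Vstar πstar hπstar hπstarVal Vπ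

end
end
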